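/- Soundness and completeness of the forward over-approximation (Hoare-style) proof system (Theorem 4.5, Fwd-over column). For every regular command r and all sets of states P, Q ⊆ M: ⊢_HL (P, r, Q) if and only if ⟦r⟧ P ⊆ Q. -/

import Mathlib

namespace RegCmd

/-- Regular commands over a type `C` of atomic commands. -/
inductive Reg (C : Type) : Type
  | atom : C → Reg C
  | seq : Reg C → Reg C → Reg C
  | choice : Reg C → Reg C → Reg C
  | star : Reg C → Reg C

/-- Collecting (forward) semantics of regular commands. -/
def sem {C M : Type} (a : C → M → Set M) : Reg C → Set M → Set M
  | .atom c => fun P => ⋃ σ ∈ P, a c σ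
  | .seq r1 r2 => fun P => sem a r2 (sem a r1 P)
  | .choice r1 r2 => fun P => sem a r1 P ∪ sem a r2 P
  | .star r => fun P => ⋃ n : ℕ, (sem a r)^[n] P

/-- Backward semantics of regular commands. -/
def bsem {C M : Type} (a : C → M → Set M) (r : Reg C) (Q : Set M) : Set M :=
  {σ | (sem a r {σ} ∩ Q).Nonempty}

/-- The forward over-approximation (Hoare-style) proof system. -/
inductive HL {C M : Type} (a : C → M → Set M) : Set M → Reg C → Set M → Prop
  | atom {c : C} {P Q : Set M} :
      sem a (.atom c) P ⊆ Q → HL a P (.atom c) Q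
  | seq {P S Q : Set M} {r1 r2 : Reg C} :
      HL a P r1 S → HL a S r2 Q → HL a P (.seq r1 r2) Q
  | choice {P Q : Set M} {r1 r2 : Reg C} :
      HL a P r1 Q → HL a P r2 Q → HL a P (.choice r1 r2) Q
  | iter {P : Set M} {r : Reg C} :
      HL a P r P → HL a P (.star r) P
  | cons {P P' Q Q' : Set M} {r : Reg C} :
      P ⊆ P' → HL a P' r Q' → Q' ⊆ Q → HL a P r Q

/-!
Soundness is an induction on derivations, using that `⟦r⟧` is monotone and that every iterate of
`⟦r⟧` maps an invariant `P` (one with `⟦r⟧ P ⊆ P`) into itself. For completeness it suffices to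
derive the strongest postcondition `(P, r, ⟦r⟧ P)` and weaken it by (Cons). The only interesting
case is `r*`: there `⟦r*⟧ P` is itself an invariant of `r`, because `⟦r⟧` commutes with unions.
-/

section

variable {C M : Type} (a : C → M → Set M)

lemma sem_mono (r : Reg C) : Monotone (sem a r) := by
  induction r with
  | atom c => exact fun P Q h => Set.biUnion_subset_biUnion_left h
  | seq r1 r2 ih1 ih2 => exact ih2.comp ih1
  | choice r1 r2 ih1 ih2 => exact fun P Q h => Set.union_subset_union (ih1 h) (ih2 h)
  | star r ih => exact fun P Q h => Set.iUnion_mono fun n => (ih.iterate n) h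

lemma iterate_iUnion_of_map_iUnion {α ι : Type*} {f : Set α → Set α}
    (hf : ∀ s : ι → Set α, f (⋃ i, s i) = ⋃ i, f (s i)) (n : ℕ) (s : ι → Set α) :
    f^[n] (⋃ i, s i) = ⋃ i, f^[n] (s i) := by
  induction n generalizing s with
  | zero => rfl
  | succ n ih => simp only [Function.iterate_succ_apply, hf, ih]

lemma sem_iUnion {ι : Type} (r : Reg C) (f : ι → Set M) :
    sem a r (⋃ i, f i) = ⋃ i, sem a r (f i) := by
  induction r generalizing f with
  | atom c => exact Set.biUnion_iUnion f (a c)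
  | seq r1 r2 ih1 ih2 => simp only [sem, ih1, ih2]
  | choice r1 r2 ih1 ih2 => simp only [sem, ih1, ih2, Set.iUnion_union_distrib]
  | star r ih =>
      simp only [sem, iterate_iUnion_of_map_iUnion ih]
      exact Set.iUnion_comm _

lemma subset_sem_star (r : Reg C) (P : Set M) : P ⊆ sem a (.star r) P :=
  Set.subset_iUnion (fun n => (sem a r)^[n] P) 0

lemma sem_sem_star_subset (r : Reg C) (P : Set M) :
    sem a r (sem a (.star r) P) ⊆ sem a (.star r) P := by
  rw [sem, sem_iUnion]
  refine Set.iUnion_subset fun n => ?_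
  rw [← Function.iterate_succ_apply' (sem a r)]
  exact Set.subset_iUnion (fun n => (sem a r)^[n] P) (n + 1)

lemma sem_star_subset_of_sem_subset {r : Reg C} {P : Set M} (hP : sem a r P ⊆ P) :
    sem a (.star r) P ⊆ P := by
  refine Set.iUnion_subset fun n => ?_
  induction n with
  | zero => exact subset_rfl
  | succ n ih =>
      rw [Function.iterate_succ_apply']
      exact (sem_mono a r ih).trans hP

lemma HL.sem_subset {P Q : Set M} {r : Reg C} (h : HL a P r Q) : sem a r P ⊆ Q := by
  induction h with
  | atom h => exact h
  | seq _ _ ih1 ih2 => exact (sem_mono a _ ih1).trans ih2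
  | choice _ _ ih1 ih2 => exact Set.union_subset ih1 ih2
  | iter _ ih => exact sem_star_subset_of_sem_subset a ih
  | cons hP _ hQ ih => exact (sem_mono a _ hP).trans (ih.trans hQ)

lemma HL.strongest_post (r : Reg C) (P : Set M) : HL a P r (sem a r P) := by
  induction r generalizing P with
  | atom c => exact .atom subset_rfl
  | seq r1 r2 ih1 ih2 => exact .seq (ih1 P) (ih2 _)
  | choice r1 r2 ih1 ih2 =>
      exact .choice (.cons subset_rfl (ih1 P) Set.subset_union_left)
        (.cons subset_rfl (ih2 P) Set.subset_union_right)
  | star r ih =>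
      exact .cons (subset_sem_star a r P)
        (.iter (.cons subset_rfl (ih _) (sem_sem_star_subset a r P))) subset_rfl

end

/-- Theorem 4.5 (Fwd-over column): soundness and completeness of the
forward over-approximation (Hoare-style) proof system. -/
theorem HL_sound_complete {C M : Type} (a : C → M → Set M)
    (r : Reg C) (P Q : Set M) :
    HL a P r Q ↔ sem a r P ⊆ Q :=
  ⟨HL.sem_subset a, fun h => .cons subset_rfl (HL.strongest_post a r P) h⟩

end RegCmd
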